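/- arXiv:2210.01679 — 3 statements merged into one kernel-verified Lean document; each statement's English description precedes it below -/
import Mathlib

section
/- Let n, m be positive integers, σ : Fin n → Fin m a cluster assignment map with every cluster V_k := σ⁻¹({k}) nonempty, and p : Matrix (Fin m) (Fin m) ℝ a row-stochastic matrix. Let π : Fin m → ℝ be nonnegative with Σ_k π_k = 1 and Σ_k π_k * p k l = π l for all l. Then the vector Π : Fin n → ℝ defined by Π j = π (σ j) / (card (V (σ j))) is a probability vector (entrywise nonnegative with Σ_j Π j = 1) and is stationary for the BMC transition matrix P, i.e. Σ_i Π i * P i j = Π j for every j ∈ Fin n. -/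
private lemma bmc_fiber_sum {n m : ℕ} (σ : Fin n → Fin m)
    (hσ : ∀ k : Fin m, ∃ i : Fin n, σ i = k) (f : Fin m → ℝ) :
    ∑ i : Fin n, f (σ i) / ((Finset.univ.filter fun x : Fin n => σ x = σ i).card : ℝ)
      = ∑ k : Fin m, f k := by
  rw [← Finset.sum_fiberwise Finset.univ σ
    (fun i => f (σ i) / ((Finset.univ.filter fun x : Fin n => σ x = σ i).card : ℝ))]
  refine Finset.sum_congr rfl fun k _ => ?_
  have hc : ((Finset.univ.filter fun x : Fin n => σ x = k).card : ℝ) ≠ 0 := by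
    obtain ⟨i, hi⟩ := hσ k
    have : i ∈ Finset.univ.filter fun x : Fin n => σ x = k := by simp [hi]
    exact_mod_cast Finset.card_ne_zero_of_mem this
  rw [Finset.sum_congr rfl (fun i hi => ?_), Finset.sum_const, nsmul_eq_mul,
    mul_div_cancel₀ _ hc]
  simp only [Finset.mem_filter] at hi
  rw [hi.2]

/-- The vector `Π j = π (σ j) / card (V (σ j))` is a probability vector and
is stationary for the BMC transition matrix `P i j = p (σ i) (σ j) / card (V (σ j))`. -/
theorem bmc_equilibrium_distribution
    (n m : ℕ) (hn : 0 < n) (hm : 0 < m)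
    (σ : Fin n → Fin m)
    (hσ : ∀ k : Fin m, ∃ i : Fin n, σ i = k)
    (p : Matrix (Fin m) (Fin m) ℝ)
    (hp0 : ∀ k l, 0 ≤ p k l) (hp1 : ∀ k, ∑ l, p k l = 1)
    (π : Fin m → ℝ) (hπ0 : ∀ k, 0 ≤ π k) (hπ1 : ∑ k, π k = 1)
    (hπstat : ∀ l, ∑ k, π k * p k l = π l)
    (P : Matrix (Fin n) (Fin n) ℝ)
    (hP : ∀ i j, P i j =
      p (σ i) (σ j) / ((Finset.univ.filter fun x : Fin n => σ x = σ j).card : ℝ))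
    (Pi : Fin n → ℝ)
    (hPi : ∀ j, Pi j =
      π (σ j) / ((Finset.univ.filter fun x : Fin n => σ x = σ j).card : ℝ)) :
    (∀ j, 0 ≤ Pi j) ∧ (∑ j, Pi j = 1) ∧ (∀ j, ∑ i, Pi i * P i j = Pi j) := by
  refine ⟨fun j => ?_, ?_, fun j => ?_⟩
  · rw [hPi]; exact div_nonneg (hπ0 _) (Nat.cast_nonneg _)
  · simp only [hPi]
    rw [bmc_fiber_sum σ hσ π, hπ1]
  · have key : ∑ i, Pi i * P i j
        = (∑ k, π k * p k (σ j)) / ((Finset.univ.filter fun x : Fin n => σ x = σ j).card : ℝ) := by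
      rw [Finset.sum_div]
      refine Eq.trans ?_ (bmc_fiber_sum σ hσ
        (fun k => π k * p k (σ j) / ((Finset.univ.filter fun x : Fin n => σ x = σ j).card : ℝ)))
      refine Finset.sum_congr rfl fun i _ => ?_
      rw [hPi, hP]
      ring
    rw [key, hπstat, hPi]
end

section
/- Let n, m be positive integers, σ : Fin n → Fin m a cluster assignment map with every cluster V_k := σ⁻¹({k}) nonempty, p : Matrix (Fin m) (Fin m) ℝ a row-stochastic matrix, and for each k ∈ Fin m let μ_k : Fin n → ℝ be a probability vector supported on V_k (μ_k i ≥ 0 for all i, μ_k i = 0 whenever σ i ≠ k, and Σ_i μ_k i = 1). Define the degree-corrected BMC transition matrix P i j = p (σ i) (σ j) * μ_{σ j} j. If π : Fin m → ℝ is nonnegative with Σ_k π_k = 1 and Σ_k π_k * p k l = π l for all l, then Π : Fin n → ℝ defined by Π i = π (σ i) * μ_{σ i} i is a probability vector (entrywise nonnegative with Σ_i Π i = 1) satisfying Σ_i Π i * P i j = Π j for every j ∈ Fin n. -/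
lemma dcbmc_aux {n m : ℕ} (σ : Fin n → Fin m) (μ : Fin m → Fin n → ℝ)
    (hμsupp : ∀ (k : Fin m) (i : Fin n), σ i ≠ k → μ k i = 0)
    (F : Fin m → ℝ) (i : Fin n) :
    F (σ i) * μ (σ i) i = ∑ k, F k * μ k i := by
  rw [Finset.sum_eq_single (σ i)]
  · intro b _ hb
    rw [hμsupp b i (Ne.symm hb), mul_zero]
  · simp

/-- For a degree-corrected BMC with transition matrix
`P i j = p (σ i) (σ j) * μ (σ j) j`, the vector `Π i = π (σ i) * μ (σ i) i` is a stationary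
probability vector. -/
theorem dcbmc_equilibrium_distribution
    (n m : ℕ) (hn : 0 < n) (hm : 0 < m)
    (σ : Fin n → Fin m)
    (hσ : ∀ k : Fin m, ∃ i : Fin n, σ i = k)
    (p : Matrix (Fin m) (Fin m) ℝ)
    (hp0 : ∀ k l, 0 ≤ p k l) (hp1 : ∀ k, ∑ l, p k l = 1)
    (μ : Fin m → Fin n → ℝ)
    (hμ0 : ∀ k i, 0 ≤ μ k i)
    (hμsupp : ∀ (k : Fin m) (i : Fin n), σ i ≠ k → μ k i = 0)
    (hμ1 : ∀ k, ∑ i, μ k i = 1)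
    (P : Matrix (Fin n) (Fin n) ℝ)
    (hP : ∀ i j, P i j = p (σ i) (σ j) * μ (σ j) j)
    (π : Fin m → ℝ) (hπ0 : ∀ k, 0 ≤ π k) (hπ1 : ∑ k, π k = 1)
    (hπstat : ∀ l, ∑ k, π k * p k l = π l)
    (Pi : Fin n → ℝ)
    (hPi : ∀ i, Pi i = π (σ i) * μ (σ i) i) :
    (∀ i, 0 ≤ Pi i) ∧ (∑ i, Pi i = 1) ∧ (∀ j, ∑ i, Pi i * P i j = Pi j) := by
  refine ⟨fun i => by rw [hPi]; exact mul_nonneg (hπ0 _) (hμ0 _ _), ?_, ?_⟩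
  · calc ∑ i, Pi i = ∑ i, ∑ k, π k * μ k i := by
          simp_rw [hPi]; exact Finset.sum_congr rfl fun i _ => dcbmc_aux σ μ hμsupp π i
      _ = ∑ k, π k * ∑ i, μ k i := by rw [Finset.sum_comm]; simp [Finset.mul_sum]
      _ = 1 := by simp_rw [hμ1]; simpa using hπ1
  · intro j
    calc ∑ i, Pi i * P i j
        = ∑ i, ∑ k, (π k * p k (σ j) * μ (σ j) j) * μ k i := by
          refine Finset.sum_congr rfl fun i _ => ?_
          rw [hPi, hP]
          have := dcbmc_aux σ μ hμsupp (fun k => π k * p k (σ j) * μ (σ j) j) i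
          rw [← this]; ring
      _ = ∑ k, (π k * p k (σ j) * μ (σ j) j) * ∑ i, μ k i := by
          rw [Finset.sum_comm]; simp [Finset.mul_sum]
      _ = (∑ k, π k * p k (σ j)) * μ (σ j) j := by
          simp_rw [hμ1, mul_one, ← Finset.sum_mul]
      _ = Pi j := by rw [hπstat, hPi]
end

section
/- Let (K_t)_{t ≥ 1} be a sequence of row-stochastic matrices indexed by Fin n, and for each t ≥ 1 let R_t be the pair-chain kernel R_t (a, b) (c, d) = (if c = b then K_{t+1} b d else 0). Then for all i ≥ 1, all t ≥ 1, and all x₁, x₂, y₁, y₂ ∈ Fin n: (1/2) * Σ_{(c,d)} |(R_i * ⋯ * R_{i+t−1}) (x₁, x₂) (c, d) − (R_i * ⋯ * R_{i+t−1}) (y₁, y₂) (c, d)| = (1/2) * Σ_{c} |(K_{i+1} * ⋯ * K_{i+t−1}) x₂ c − (K_{i+1} * ⋯ * K_{i+t−1}) y₂ c|, where the empty matrix product (when t = 1) is the identity. In particular, if (1/2) * Σ_c |(K_{i+1} * ⋯ * K_{i+t−1}) a c − (K_{i+1} * ⋯ * K_{i+t−1}) b c| ≤ 1/2 for all a, b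 ∈ Fin n, then the corresponding total-variation half-sum of the pair chain over t steps is at most 1/2; hence the chain of transitions E_t = (X_t, X_{t+1}) has mixing time at most one more than the mixing time of the original chain. -/
lemma pair_key {n : ℕ}
    (K : ℕ → Matrix (Fin n) (Fin n) ℝ)
    (R : ℕ → Matrix (Fin n × Fin n) (Fin n × Fin n) ℝ)
    (hR : ∀ (t : ℕ) (a b c d : Fin n),
      R t (a, b) (c, d) = if c = b then K (t + 1) b d else 0) :
    ∀ t : ℕ, 1 ≤ t → ∀ (i : ℕ) (x₁ x₂ c d : Fin n),
      (((List.range t).map fun s => R (i + s)).prod (x₁, x₂) (c, d))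
        = (((List.range (t - 1)).map fun s => K (i + 1 + s)).prod x₂ c) * K (i + t) c d := by
  intro t
  induction t with
  | zero => intro h; omega
  | succ t ih =>
    intro _ i x₁ x₂ c d
    rcases Nat.eq_zero_or_pos t with h0 | hpos
    · subst h0
      simp only [zero_add, List.range_succ, List.range_zero, List.nil_append,
        List.map_cons, List.map_nil, List.prod_cons, List.prod_nil, mul_one]
      rw [hR]
      simp only [Nat.sub_self, List.range_zero, List.map_nil, List.prod_nil,
        Matrix.one_apply]
      rcases eq_or_ne c x₂ with h | h
      · subst h; simp
      · simp [h, Ne.symm h]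
    · have ht : t - 1 + 1 = t := Nat.succ_pred_eq_of_pos hpos
      rw [List.range_succ, List.map_append, List.prod_append]
      simp only [List.map_cons, List.map_nil, List.prod_cons, List.prod_nil, mul_one]
      rw [Matrix.mul_apply, Fintype.sum_prod_type]
      have e1 : i + 1 + (t - 1) = i + t := by omega
      conv_rhs => rw [Nat.add_sub_cancel, ← ht, List.range_succ, List.map_append,
        List.prod_append]
      simp only [List.map_cons, List.map_nil, List.prod_cons, List.prod_nil, mul_one,
        Matrix.mul_apply, e1, ht]
      rw [Finset.sum_mul]
      simp only [ih hpos, hR, mul_ite, mul_zero, Finset.sum_ite_eq, Finset.mem_univ, if_true]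
      rw [show i + t + 1 = i + (t + 1) from by omega]

/-- For the pair-chain kernels `R_t (a,b) (c,d) = if c = b then K_{t+1} b d else 0`,
the total-variation half-sum between two rows of the `t`-step product of the pair chain equals
the corresponding total-variation half-sum for the `(t-1)`-step product of the original chain
started at the second coordinates; in particular, if the latter is at most 1/2 for all starting
states, then so is the former (so the transition chain mixes at most one step slower). -/
theorem pair_chain_total_variation
    (n : ℕ) (hn : 0 < n)
    (K : ℕ → Matrix (Fin n) (Fin n) ℝ)
    (hK0 : ∀ t, 1 ≤ t → ∀ i j, 0 ≤ K t i j)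
    (hK1 : ∀ t, 1 ≤ t → ∀ i, ∑ j, K t i j = 1)
    (R : ℕ → Matrix (Fin n × Fin n) (Fin n × Fin n) ℝ)
    (hR : ∀ (t : ℕ) (a b c d : Fin n),
      R t (a, b) (c, d) = if c = b then K (t + 1) b d else 0) :
    ∀ i t : ℕ, 1 ≤ i → 1 ≤ t →
      (∀ x₁ x₂ y₁ y₂ : Fin n,
        (1 / 2 : ℝ) * ∑ cd : Fin n × Fin n,
            |(((List.range t).map fun s => R (i + s)).prod (x₁, x₂) cd)
              - (((List.range t).map fun s => R (i + s)).prod (y₁, y₂) cd)|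
          = (1 / 2 : ℝ) * ∑ c : Fin n,
              |(((List.range (t - 1)).map fun s => K (i + 1 + s)).prod x₂ c)
                - (((List.range (t - 1)).map fun s => K (i + 1 + s)).prod y₂ c)|) ∧
      ((∀ a b : Fin n,
          (1 / 2 : ℝ) * ∑ c : Fin n,
              |(((List.range (t - 1)).map fun s => K (i + 1 + s)).prod a c)
                - (((List.range (t - 1)).map fun s => K (i + 1 + s)).prod b c)|
            ≤ 1 / 2) →
        ∀ x₁ x₂ y₁ y₂ : Fin n,
          (1 / 2 : ℝ) * ∑ cd : Fin n × Fin n,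
              |(((List.range t).map fun s => R (i + s)).prod (x₁, x₂) cd)
                - (((List.range t).map fun s => R (i + s)).prod (y₁, y₂) cd)|
            ≤ 1 / 2) := by
  intro i t hi htp
  have hmain : ∀ x₁ x₂ y₁ y₂ : Fin n,
      (1 / 2 : ℝ) * ∑ cd : Fin n × Fin n,
          |(((List.range t).map fun s => R (i + s)).prod (x₁, x₂) cd)
            - (((List.range t).map fun s => R (i + s)).prod (y₁, y₂) cd)|
        = (1 / 2 : ℝ) * ∑ c : Fin n,
            |(((List.range (t - 1)).map fun s => K (i + 1 + s)).prod x₂ c)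
              - (((List.range (t - 1)).map fun s => K (i + 1 + s)).prod y₂ c)| := by
    intro x₁ x₂ y₁ y₂
    congr 1
    rw [Fintype.sum_prod_type]
    refine Finset.sum_congr rfl fun c _ => ?_
    have hit : 1 ≤ i + t := by omega
    calc ∑ d, |(((List.range t).map fun s => R (i + s)).prod (x₁, x₂) (c, d))
            - (((List.range t).map fun s => R (i + s)).prod (y₁, y₂) (c, d))|
        = ∑ d, |(((List.range (t - 1)).map fun s => K (i + 1 + s)).prod x₂ c)
              - (((List.range (t - 1)).map fun s => K (i + 1 + s)).prod y₂ c)|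
              * K (i + t) c d := by
          refine Finset.sum_congr rfl fun d _ => ?_
          rw [pair_key K R hR t htp i x₁ x₂ c d, pair_key K R hR t htp i y₁ y₂ c d,
            ← sub_mul, abs_mul, abs_of_nonneg (hK0 (i + t) hit c d)]
      _ = _ := by rw [← Finset.mul_sum, hK1 (i + t) hit c, mul_one]
  refine ⟨hmain, fun h x₁ x₂ y₁ y₂ => ?_⟩
  rw [hmain x₁ x₂ y₁ y₂]
  exact h x₂ y₂
end
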